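/- arXiv:2311.04630 — 3 statements merged into one kernel-verified Lean document; each statement's English description precedes it below -/
import Mathlib

section
/- Let Γ be an abelian group and Ψ : Γ × Γ → 𝕋 a normalised 2-cocycle. Define Υ(γ₁,γ₂) := conj(Ψ(-γ₁, γ₁+γ₂)) and Ψ̊(γ₁,γ₂) := Ψ(γ₁, -γ₁-γ₂). Then for all x₁, x₂, x₃ ∈ Γ: Υ(x₂, x₁+x₃) · conj(Υ(x₁+x₂, x₃)) = conj(Ψ(x₁,x₃)) · Ψ̊(x₁,x₂). -/
/-! The identity is the cocycle identity at `(x₁, -x₁ - x₂, x₁ + x₂ + x₃)`, with one factor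
moved to each side; moving a factor across costs a conjugation, since `Ψ` is unimodular. -/

theorem RCLike.mem_unitary_of_norm_eq_one {K : Type*} [RCLike K] {z : K} (hz : ‖z‖ = 1) :
    z ∈ unitary K := by
  refine Unitary.mem_iff.2 ⟨?_, ?_⟩ <;> simp [RCLike.conj_mul, RCLike.mul_conj, hz]

theorem star_mul_eq_star_mul_of_mul_eq {R : Type*} [CommMonoid R] [StarMul R] {a b c d : R}
    (ha : a ∈ unitary R) (hc : c ∈ unitary R) (h : d * a = b * c) :
    star a * b = star c * d :=
  calc star a * b = star a * (b * c) * star c := by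
        rw [mul_assoc, mul_assoc, Unitary.mul_star_self_of_mem hc, mul_one]
    _ = star a * a * (star c * d) := by rw [← h]; ac_rfl
    _ = star c * d := by rw [Unitary.star_mul_self_of_mem ha, one_mul]

theorem cocycle_apply_neg_sub {Γ M : Type*} [AddCommGroup Γ] [Mul M] (Ψ : Γ → Γ → M)
    (hcoc : ∀ a b c, Ψ a b * Ψ (a + b) c = Ψ b c * Ψ a (b + c)) (x₁ x₂ x₃ : Γ) :
    Ψ x₁ (-x₁ - x₂) * Ψ (-x₂) (x₁ + x₂ + x₃) = Ψ (-x₁ - x₂) (x₁ + x₂ + x₃) * Ψ x₁ x₃ := by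
  have h := hcoc x₁ (-x₁ - x₂) (x₁ + x₂ + x₃)
  rwa [show x₁ + (-x₁ - x₂) = -x₂ by abel, show -x₁ - x₂ + (x₁ + x₂ + x₃) = x₃ by abel] at h

theorem stmt9_general {Γ : Type*} [AddCommGroup Γ] (Ψ Υ Ψring : Γ → Γ → ℂ)
    (hmod : ∀ a b, ‖Ψ a b‖ = 1)
    (hcoc : ∀ a b c, Ψ a b * Ψ (a + b) c = Ψ b c * Ψ a (b + c))
    (hΥ : ∀ a b, Υ a b = (starRingEnd ℂ) (Ψ (-a) (a + b)))
    (hring : ∀ a b, Ψring a b = Ψ a (-a - b)) :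
    ∀ x₁ x₂ x₃ : Γ, Υ x₂ (x₁ + x₃) * (starRingEnd ℂ) (Υ (x₁ + x₂) x₃) =
      (starRingEnd ℂ) (Ψ x₁ x₃) * Ψring x₁ x₂ := by
  intro x₁ x₂ x₃
  rw [hΥ, hΥ, hring, Complex.conj_conj, neg_add', show x₂ + (x₁ + x₃) = x₁ + x₂ + x₃ by abel]
  exact star_mul_eq_star_mul_of_mul_eq (RCLike.mem_unitary_of_norm_eq_one (hmod _ _))
    (RCLike.mem_unitary_of_norm_eq_one (hmod _ _)) (cocycle_apply_neg_sub Ψ hcoc x₁ x₂ x₃)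

/-- For a normalised circle-valued 2-cocycle `Ψ` on an abelian group, with
`Υ(γ₁,γ₂) := conj(Ψ(-γ₁,γ₁+γ₂))` and `Ψ̊(γ₁,γ₂) := Ψ(γ₁,-γ₁-γ₂)`, one has
`Υ(x₂,x₁+x₃) · conj(Υ(x₁+x₂,x₃)) = conj(Ψ(x₁,x₃)) · Ψ̊(x₁,x₂)`. -/
theorem stmt9 {Γ : Type*} [AddCommGroup Γ] (Ψ Υ Ψring : Γ → Γ → ℂ)
    (hmod : ∀ a b, ‖Ψ a b‖ = 1)
    (hcoc : ∀ a b c, Ψ a b * Ψ (a + b) c = Ψ b c * Ψ a (b + c))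
    (hnorm : ∀ γ : Γ, Ψ 0 γ = 1 ∧ Ψ γ 0 = 1)
    (hΥ : ∀ a b, Υ a b = (starRingEnd ℂ) (Ψ (-a) (a + b)))
    (hring : ∀ a b, Ψring a b = Ψ a (-a - b)) :
    ∀ x₁ x₂ x₃ : Γ, Υ x₂ (x₁ + x₃) * (starRingEnd ℂ) (Υ (x₁ + x₂) x₃) =
      (starRingEnd ℂ) (Ψ x₁ x₃) * Ψring x₁ x₂ :=
  stmt9_general Ψ Υ Ψring hmod hcoc hΥ hring
end

section
/- Let H be a bialgebra over a commutative ring, Δ its comultiplication, and Ω an invertible element of H ⊗ H satisfying (Ω ⊗ 1)·((Δ ⊗ id)(Ω)) = (1 ⊗ Ω)·((id ⊗ Δ)(Ω)). Let Δ_Ω(x) := Ω·Δ(x)·Ω⁻¹ be the twisted comultiplication. Then Ω⁻¹ is a 2-cocycle with respect to Δ_Ω, i.e. (Ω⁻¹ ⊗ 1)·((Δ_Ω ⊗ id)(Ω⁻¹)) = (1 ⊗ Ω⁻¹)·((id ⊗ Δ_Ω)(Ω⁻¹)); consequently twisting Δ_Ω by Ω⁻¹ returns the original comultiplication Δ. 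-/
/-!
Extended to `H ⊗ H`, the maps `Δ_Ω ⊗ id` and `id ⊗ Δ_Ω` are the algebra maps `Δ ⊗ id` and
`id ⊗ Δ` conjugated by `Ω ⊗ 1` and `1 ⊗ Ω`. After cancelling the outer factors, the two sides
of the cocycle identity for `Ω⁻¹` become `((Ω ⊗ 1)·(Δ ⊗ id)(Ω))⁻¹` and
`((1 ⊗ Ω)·(id ⊗ Δ)(Ω))⁻¹`, which agree by the cocycle identity for `Ω`.
-/

open TensorProduct

section Twist

variable {R A B C : Type*} [CommSemiring R] [Semiring A] [Semiring B] [Semiring C]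
  [Algebra R A] [Algebra R B] [Algebra R C]

theorem map_id_right_eq_conj_of_eq_conj {D : A →ₗ[R] B} {φ : A →ₐ[R] B} {w w' : B}
    (hD : ∀ x, D x = w * φ x * w') (z : A ⊗[R] C) :
    TensorProduct.map D LinearMap.id z =
      (w ⊗ₜ[R] (1 : C)) * Algebra.TensorProduct.map φ (AlgHom.id R C) z * (w' ⊗ₜ[R] (1 : C)) := by
  induction z using TensorProduct.induction_on with
  | zero => simp
  | tmul a c => simp [hD, Algebra.TensorProduct.tmul_mul_tmul]
  | add y z hy hz => simp only [map_add, hy, hz, mul_add, add_mul]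

theorem map_id_left_eq_conj_of_eq_conj {D : A →ₗ[R] B} {φ : A →ₐ[R] B} {w w' : B}
    (hD : ∀ x, D x = w * φ x * w') (z : C ⊗[R] A) :
    TensorProduct.map LinearMap.id D z =
      ((1 : C) ⊗ₜ[R] w) * Algebra.TensorProduct.map (AlgHom.id R C) φ z * ((1 : C) ⊗ₜ[R] w') := by
  induction z using TensorProduct.induction_on with
  | zero => simp
  | tmul c a => simp [hD, Algebra.TensorProduct.tmul_mul_tmul]
  | add y z hy hz => simp only [map_add, hy, hz, mul_add, add_mul]

end Twist

theorem inv_cocycle_of_cocycle {M N Φ : Type*} [Monoid M] [Monoid N] [FunLike Φ M N]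
    [MonoidHomClass Φ M N] (L F L' F' : Φ) {a a' : M} (h : a * a' = 1) (h' : a' * a = 1)
    (hcoc : L a * F a = L' a * F' a) :
    L a' * (L a * F a' * L a') = L' a' * (L' a * F' a' * L' a') := by
  have hL := map_mul_eq_one L h'
  have hL' := map_mul_eq_one L' h'
  rw [← mul_assoc, ← mul_assoc, hL, one_mul, ← mul_assoc, ← mul_assoc, hL', one_mul]
  refine left_inv_eq_right_inv (a := L a * F a) ?_ ?_
  · rw [mul_assoc, ← mul_assoc (L a'), hL, one_mul, map_mul_eq_one F h']
  · rw [hcoc, mul_assoc, ← mul_assoc (F' a), map_mul_eq_one F' h, one_mul, map_mul_eq_one L' h]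

/-- If `Ω` is an invertible 2-cocycle in `H ⊗ H` for a bialgebra `H`, with twisted
comultiplication `Δ_Ω(x) = Ω·Δ(x)·Ω⁻¹`, then `Ω⁻¹` is a 2-cocycle with respect to `Δ_Ω`,
and twisting `Δ_Ω` by `Ω⁻¹` gives back `Δ`. -/
theorem stmt13 {R H : Type*} [CommRing R] [Ring H] [Bialgebra R H]
    (Ω Ω' : H ⊗[R] H) (hΩ : Ω * Ω' = 1) (hΩ' : Ω' * Ω = 1)
    (hcoc : (Ω ⊗ₜ[R] (1 : H)) * (TensorProduct.map (Coalgebra.comul (R := R)) LinearMap.id) Ω =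
      (TensorProduct.assoc R H H H).symm ((1 : H) ⊗ₜ[R] Ω) *
        (TensorProduct.assoc R H H H).symm
          ((TensorProduct.map LinearMap.id (Coalgebra.comul (R := R))) Ω))
    (D : H →ₗ[R] H ⊗[R] H)
    (hD : ∀ x : H, D x = Ω * Coalgebra.comul (R := R) x * Ω') :
    ((Ω' ⊗ₜ[R] (1 : H)) * (TensorProduct.map D LinearMap.id) Ω' =
      (TensorProduct.assoc R H H H).symm ((1 : H) ⊗ₜ[R] Ω') *
        (TensorProduct.assoc R H H H).symm ((TensorProduct.map LinearMap.id D) Ω')) ∧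
    (∀ x : H, Ω' * D x * Ω = Coalgebra.comul (R := R) x) := by
  let E := (Algebra.TensorProduct.assoc R R R H H H).symm
  have hE : ⇑(TensorProduct.assoc R H H H).symm = E := rfl
  let Δ := Bialgebra.comulAlgHom R H
  have hDΔ : ∀ x, D x = Ω * Δ x * Ω' := hD
  refine ⟨?_, fun x => ?_⟩
  · rw [map_id_right_eq_conj_of_eq_conj hDΔ, map_id_left_eq_conj_of_eq_conj hDΔ, hE, map_mul,
      map_mul]
    exact inv_cocycle_of_cocycle Algebra.TensorProduct.includeLeft
      (Algebra.TensorProduct.map Δ (AlgHom.id R H))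
      (E.toAlgHom.comp Algebra.TensorProduct.includeRight)
      (E.toAlgHom.comp (Algebra.TensorProduct.map (AlgHom.id R H) Δ)) hΩ hΩ' hcoc
  · rw [hD, ← mul_assoc, ← mul_assoc, hΩ', one_mul, mul_assoc, hΩ', mul_one]
end

section
/- There exists a sequence (f_n) of continuous functions ℝ → ℝ vanishing at infinity with 0 ≤ f_n ≤ 1, f_n(0) = 0, and f_n(x) = 1 for all x with 1/n ≤ |x| ≤ n, such that: (1) for every continuous function g : ℝ → ℂ vanishing at infinity with g(0) = 0, the products f_n·g converge to g uniformly on ℝ; and (2) there exists a continuous function h : ℝ → ℂ vanishing at infinity such that f_n·h does not converge to h uniformly (indeed ‖f_n·h - h‖_∞ ≥ |h(0)| for all n, so any h with h(0) ≠ 0 works). -/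
/-!
Take for `f n` the piecewise linear plateau rising from `0` at the origin to `1` at
`1/(n+1)`, equal to `1` up to `n+1` and back to `0` at `n+2`. Where `f n ≠ 1` we have
`‖f n g - g‖ ≤ ‖g‖`, and as `n → ∞` this region shrinks into every neighbourhood of `0`
and of `∞` (the filter `𝓝 0 ⊔ cocompact ℝ`), where a `g` with `g 0 = 0` is uniformly small.
Conversely `f n 0 = 0` forces `(f n h - h)(0) = -h(0)` for every `n`.
-/

open Filter Topology Set

noncomputable def plateau (n : ℕ) (x : ℝ) : ℝ :=
  min (((n : ℝ) + 1) * |x|) (min 1 (max ((n : ℝ) + 2 - |x|) 0))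

noncomputable def tent (x : ℝ) : ℝ :=
  max 0 (1 - |x|)

section Plateau

variable (n : ℕ)

theorem continuous_plateau : Continuous (plateau n) := by
  unfold plateau
  fun_prop

theorem plateau_nonneg (x : ℝ) : 0 ≤ plateau n x :=
  le_min (by positivity) (le_min zero_le_one (le_max_right _ _))

theorem plateau_le_one (x : ℝ) : plateau n x ≤ 1 :=
  (min_le_right _ _).trans (min_le_left _ _)

@[simp]
theorem plateau_zero : plateau n 0 = 0 := by
  simp [plateau]

theorem plateau_eq_one {x : ℝ} (h₁ : 1 / ((n : ℝ) + 1) ≤ |x|) (h₂ : |x| ≤ (n : ℝ) + 1) :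
    plateau n x = 1 := by
  have hrise : 1 ≤ ((n : ℝ) + 1) * |x| := by
    rwa [div_le_iff₀' (by positivity)] at h₁
  have hfall : 1 ≤ (n : ℝ) + 2 - |x| := by linarith
  exact (plateau_le_one n x).antisymm
    (le_min hrise (le_min le_rfl (hfall.trans (le_max_left _ _))))

theorem plateau_eq_zero {x : ℝ} (h : (n : ℝ) + 2 ≤ |x|) : plateau n x = 0 := by
  rw [plateau, max_eq_right (by linarith), min_eq_right zero_le_one,
    min_eq_right (by positivity)]

theorem hasCompactSupport_plateau : HasCompactSupport (plateau n) :=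
  HasCompactSupport.intro (isCompact_closedBall 0 ((n : ℝ) + 2)) fun x hx =>
    plateau_eq_zero n (by simpa using (not_le.1 (Metric.mem_closedBall.not.1 hx)).le)

end Plateau

theorem continuous_tent : Continuous tent := by
  unfold tent
  fun_prop

@[simp]
theorem tent_zero : tent 0 = 1 := by
  simp [tent]

theorem hasCompactSupport_tent : HasCompactSupport tent :=
  HasCompactSupport.intro (isCompact_closedBall 0 1) fun x hx => by
    have : 1 ≤ |x| := by simpa using (not_le.1 (Metric.mem_closedBall.not.1 hx)).le
    simp [tent, this]

theorem norm_ofReal_mul_sub_le {t : ℝ} (ht : 0 ≤ t ∧ t ≤ 1) (z : ℂ) : ‖(t : ℂ) * z - z‖ ≤ ‖z‖ :=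
  calc ‖(t : ℂ) * z - z‖ = |t - 1| * ‖z‖ := by
        rw [← sub_one_mul, norm_mul, ← Complex.ofReal_one, ← Complex.ofReal_sub,
          Complex.norm_real, Real.norm_eq_abs]
    _ ≤ ‖z‖ := mul_le_of_le_one_left (norm_nonneg z) (abs_le.2 ⟨by linarith, by linarith⟩)

theorem eventually_forall_of_abs_lt_or_lt_abs {p : ℝ → Prop}
    (hp : ∀ᶠ x in 𝓝 0 ⊔ cocompact ℝ, p x) :
    ∀ᶠ n : ℕ in atTop, ∀ x : ℝ, |x| < 1 / ((n : ℝ) + 1) ∨ (n : ℝ) + 1 < |x| → p x := by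
  obtain ⟨hnear, hfar⟩ := eventually_sup.1 hp
  obtain ⟨δ, hδ, hball⟩ := Metric.eventually_nhds_iff.1 hnear
  rw [← Metric.cobounded_eq_cocompact, ← comap_norm_atTop, eventually_comap,
    eventually_atTop] at hfar
  obtain ⟨R, hR⟩ := hfar
  filter_upwards [tendsto_one_div_add_atTop_nhds_zero_nat.eventually_lt_const hδ,
    eventually_ge_atTop ⌈R⌉₊] with n hnδ hnR x hx
  rcases hx with hsmall | hlarge
  · exact hball (by rw [Real.dist_eq, sub_zero]; linarith)
  · have : R ≤ (n : ℝ) := (Nat.le_ceil R).trans (by exact_mod_cast hnR)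
    exact hR ‖x‖ (by rw [Real.norm_eq_abs]; linarith) x rfl

theorem tendstoUniformly_ofReal_mul {f : ℕ → ℝ → ℝ} (hf : ∀ n x, 0 ≤ f n x ∧ f n x ≤ 1)
    (hf_one : ∀ (n : ℕ) x, 1 / ((n : ℝ) + 1) ≤ |x| → |x| ≤ (n : ℝ) + 1 → f n x = 1)
    {g : ℝ → ℂ} (hg : Tendsto g (𝓝 0 ⊔ cocompact ℝ) (𝓝 0)) :
    TendstoUniformly (fun n x => (f n x : ℂ) * g x) g atTop := by
  rw [Metric.tendstoUniformly_iff]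
  intro ε hε
  have hg_small : ∀ᶠ x in 𝓝 0 ⊔ cocompact ℝ, ‖g x‖ < ε :=
    (tendsto_zero_iff_norm_tendsto_zero.1 hg).eventually_lt_const hε
  filter_upwards [eventually_forall_of_abs_lt_or_lt_abs hg_small] with n hn x
  by_cases hx : 1 / ((n : ℝ) + 1) ≤ |x| ∧ |x| ≤ (n : ℝ) + 1
  · simpa [hf_one n x hx.1 hx.2] using hε
  · rw [not_and_or, not_le, not_le] at hx
    rw [dist_eq_norm']
    exact (norm_ofReal_mul_sub_le (hf n x) (g x)).trans_lt (hn x hx)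

theorem norm_le_iSup_norm_ofReal_mul_sub {α : Type*} {f : α → ℝ} (hf : ∀ x, 0 ≤ f x ∧ f x ≤ 1)
    {h : α → ℂ} (hh : BddAbove (range fun x => ‖h x‖)) {a : α} (hfa : f a = 0) :
    ‖h a‖ ≤ ⨆ x, ‖(f x : ℂ) * h x - h x‖ := by
  obtain ⟨C, hC⟩ := hh
  have hbdd : BddAbove (range fun x => ‖(f x : ℂ) * h x - h x‖) :=
    ⟨C, forall_mem_range.2 fun x =>
      (norm_ofReal_mul_sub_le (hf x) (h x)).trans (hC (mem_range_self x))⟩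
  calc ‖h a‖ = ‖(f a : ℂ) * h a - h a‖ := by simp [hfa]
    _ ≤ ⨆ x, ‖(f x : ℂ) * h x - h x‖ := le_ciSup hbdd a

theorem not_tendstoUniformly_ofReal_mul {ι α : Type*} {l : Filter ι} [l.NeBot]
    {f : ι → α → ℝ} {h : α → ℂ} {a : α} (hfa : ∀ i, f i a = 0) (ha : h a ≠ 0) :
    ¬ TendstoUniformly (fun i x => (f i x : ℂ) * h x) h l := fun hu => by
  have hlim := hu.tendsto_at a
  simp only [hfa, Complex.ofReal_zero, zero_mul] at hlim
  exact ha (tendsto_nhds_unique tendsto_const_nhds hlim).symm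

/-- There is a sequence `(f_n)` in `C₀(ℝ)` with `0 ≤ f_n ≤ 1`, `f_n(0) = 0` and
`f_n ≡ 1` on `{1/n ≤ |x| ≤ n}`, such that `f_n·g → g` uniformly for every
`g ∈ C₀(ℝ)` with `g(0) = 0`, while for some `h ∈ C₀(ℝ)` (any `h` with `h(0) ≠ 0`)
`f_n·h` does not converge uniformly to `h`. -/
theorem stmt15 :
    ∃ f : ℕ → ℝ → ℝ,
      (∀ n : ℕ, Continuous (f n) ∧ Tendsto (f n) (cocompact ℝ) (nhds 0) ∧
        (∀ x : ℝ, 0 ≤ f n x ∧ f n x ≤ 1) ∧ f n 0 = 0 ∧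
        (∀ x : ℝ, 1 / ((n : ℝ) + 1) ≤ |x| → |x| ≤ (n : ℝ) + 1 → f n x = 1)) ∧
      (∀ g : ℝ → ℂ, Continuous g → Tendsto g (cocompact ℝ) (nhds 0) → g 0 = 0 →
        TendstoUniformly (fun n x => (f n x : ℂ) * g x) g atTop) ∧
      (∃ h : ℝ → ℂ, Continuous h ∧ Tendsto h (cocompact ℝ) (nhds 0) ∧ h 0 ≠ 0 ∧
        (∀ n : ℕ, ‖h 0‖ ≤ ⨆ x : ℝ, ‖(f n x : ℂ) * h x - h x‖) ∧
        ¬ TendstoUniformly (fun n x => (f n x : ℂ) * h x) h atTop) := by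
  have hbounds : ∀ n x, 0 ≤ plateau n x ∧ plateau n x ≤ 1 := fun n x =>
    ⟨plateau_nonneg n x, plateau_le_one n x⟩
  have hh_cont : Continuous fun x => (tent x : ℂ) :=
    Complex.continuous_ofReal.comp continuous_tent
  have hh_supp : HasCompactSupport fun x => (tent x : ℂ) :=
    hasCompactSupport_tent.comp_left Complex.ofReal_zero
  refine ⟨plateau, fun n => ⟨continuous_plateau n, (hasCompactSupport_plateau n).is_zero_at_infty,
    hbounds n, plateau_zero n, fun x => plateau_eq_one n⟩, ?_,
    ⟨fun x => (tent x : ℂ), hh_cont, hh_supp.is_zero_at_infty, by simp, ?_, ?_⟩⟩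
  · intro g hg hg_infty hg0
    exact tendstoUniformly_ofReal_mul hbounds (fun n x => plateau_eq_one n)
      ((hg0 ▸ hg.tendsto 0).sup hg_infty)
  · exact fun n => norm_le_iSup_norm_ofReal_mul_sub (hbounds n)
      (hh_cont.norm.bddAbove_range_of_hasCompactSupport hh_supp.norm) (plateau_zero n)
  · exact not_tendstoUniformly_ofReal_mul plateau_zero (by simp)
end
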